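/- Let σ ∈ I_{n,k}^max and υ ∈ I_{n,k} with (i,i+1) ∈ σ and (i,i+1) ∈ υ, and let σ̃ = σ̃^{(i,i+1)} and υ̃ = υ̃^{(i,i+1)} in I_{n−2,k−1} be obtained by extracting the arc (i,i+1). Then υ ≤ σ if and only if υ̃ ≤ σ̃; υ is a singular point of σ if and only if υ̃ is a singular point of σ̃; and υ ∈ Sing(σ) if and only if υ̃ ∈ Sing(σ̃). -/

import Mathlib

/- Link patterns: an involution in `I_{n,k}` (k disjoint 2-cycles in S_n) is identified
with its set of arcs, a finset of pairs `(i,j)` with `1 ≤ i < j ≤ n`, pairwise disjoint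
endpoints, of cardinality `k`. -/

attribute [local instance] Classical.propDecidable

namespace LinkPatterns

/-- `σ` is a link pattern on the points `1,…,n`: each arc `(i,j)` satisfies
`1 ≤ i < j ≤ n` and distinct arcs have pairwise distinct endpoints. -/
def IsLinkPattern (n : ℕ) (σ : Finset (ℕ × ℕ)) : Prop :=
  (∀ p ∈ σ, 1 ≤ p.1 ∧ p.1 < p.2 ∧ p.2 ≤ n) ∧
  (∀ p ∈ σ, ∀ q ∈ σ, p ≠ q → p.1 ≠ q.1 ∧ p.1 ≠ q.2 ∧ p.2 ≠ q.1 ∧ p.2 ≠ q.2)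

/-- The fixed points `σ⁰` of a link pattern on `1,…,n`. -/
noncomputable def fixedPts (n : ℕ) (σ : Finset (ℕ × ℕ)) : Finset ℕ :=
  (Finset.Icc 1 n).filter (fun f => ∀ p ∈ σ, p.1 ≠ f ∧ p.2 ≠ f)

/-- `c(σ)`: the number of crossings, i.e. of pairs of arcs `(i,j),(i',j')` with
`i < i' < j < j'`. -/
noncomputable def crossings (σ : Finset (ℕ × ℕ)) : ℕ :=
  ((σ ×ˢ σ).filter (fun q => q.1.1 < q.2.1 ∧ q.2.1 < q.1.2 ∧ q.1.2 < q.2.2)).card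

/-- `b(σ)`: the number of pairs (arc, fixed point) with the fixed point strictly
under the arc. -/
noncomputable def bridges (n : ℕ) (σ : Finset (ℕ × ℕ)) : ℕ :=
  ((σ ×ˢ fixedPts n σ).filter (fun q => q.1.1 < q.2 ∧ q.2 < q.1.2)).card

/-- `R_{[a,b]}(σ)`: the number of arcs `(i,j) ∈ σ` with `a ≤ i < j ≤ b`. -/
noncomputable def RInt (σ : Finset (ℕ × ℕ)) (a b : ℕ) : ℕ :=
  (σ.filter (fun p => a ≤ p.1 ∧ p.2 ≤ b)).card

/-- The partial order: `υ ≤ σ` iff `R_{[a,b]}(υ) ≤ R_{[a,b]}(σ)` for all `1 ≤ a < b ≤ n`. -/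
def lpLE (n : ℕ) (υ σ : Finset (ℕ × ℕ)) : Prop :=
  ∀ a b : ℕ, 1 ≤ a → a < b → b ≤ n → RInt υ a b ≤ RInt σ a b

/-- `σ'` is a predecessor of `σ`, i.e. is obtained from `σ` by an elementary move
forward (of first or second type). -/
def IsPredecessor (n : ℕ) (σ' σ : Finset (ℕ × ℕ)) : Prop :=
  (∃ i j f : ℕ, (i, j) ∈ σ ∧ f ∈ fixedPts n σ ∧ i < f ∧ f < j ∧
    (σ' = insert (i, f) (σ.erase (i, j)) ∨ σ' = insert (f, j) (σ.erase (i, j)))) ∨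
  (∃ i j l m : ℕ, (i, j) ∈ σ ∧ (l, m) ∈ σ ∧ i < l ∧ l < j ∧ j < m ∧
    (σ' = insert (i, l) (insert (j, m) ((σ.erase (i, j)).erase (l, m))) ∨
     σ' = insert (i, m) (insert (l, j) ((σ.erase (i, j)).erase (l, m)))))

/-- All finsets of pairs of points of `1,…,n`: an ambient finite set in which all link
patterns on `1,…,n` live. -/
noncomputable def allSub (n : ℕ) : Finset (Finset (ℕ × ℕ)) :=
  (Finset.Icc 1 n ×ˢ Finset.Icc 1 n).powerset

/-- `a_{σ,υ}`: the number of `ω ∈ I_{n,k}` with `ω ≤ σ` such that `ω` is a predecessor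
of `υ` or `υ` is a predecessor of `ω` (the number of edges at `υ` in the graph `G_σ`). -/
noncomputable def aNum (n k : ℕ) (σ υ : Finset (ℕ × ℕ)) : ℕ :=
  ((allSub n).filter (fun ω => IsLinkPattern n ω ∧ ω.card = k ∧ lpLE n ω σ ∧
    (IsPredecessor n ω υ ∨ IsPredecessor n υ ω))).card

/-- `p_σ := C(n-k,2) - C(n-2k,2) - b(σ) - c(σ)`. -/
noncomputable def pNum (n k : ℕ) (σ : Finset (ℕ × ℕ)) : ℕ :=
  Nat.choose (n - k) 2 - Nat.choose (n - 2 * k) 2 - bridges n σ - crossings σ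

/-- `σ ∈ I_{n,k}^max`: a link pattern with no crossings and no fixed point under an arc. -/
def IsMaximal (n : ℕ) (σ : Finset (ℕ × ℕ)) : Prop :=
  IsLinkPattern n σ ∧ bridges n σ = 0 ∧ crossings σ = 0

/-- `υ` is a singular point of `σ`: `a_{σ,υ} > p_σ`. -/
def IsSingularPt (n k : ℕ) (σ υ : Finset (ℕ × ℕ)) : Prop :=
  pNum n k σ < aNum n k σ υ

/-- `υ ∈ Sing(σ)`: `υ ∈ I_{n,k}`, `υ ≤ σ`, `υ` is a singular point of `σ`, and `υ` is
maximal w.r.t. `≤` among the singular points of `σ`. -/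
def InSing (n k : ℕ) (σ υ : Finset (ℕ × ℕ)) : Prop :=
  IsLinkPattern n υ ∧ υ.card = k ∧ lpLE n υ σ ∧ IsSingularPt n k σ υ ∧
  ∀ ω : Finset (ℕ × ℕ), IsLinkPattern n ω → ω.card = k → lpLE n ω σ →
    IsSingularPt n k σ ω → lpLE n υ ω → ω = υ

/-- `τ*(σ)`: the set of minimal arcs `(i,i+1)` of `σ`. -/
noncomputable def tauStar (σ : Finset (ℕ × ℕ)) : Finset (ℕ × ℕ) :=
  σ.filter (fun p => p.2 = p.1 + 1)

/-- `ρ(σ)` for `σ ∈ I_{n,k}^max`. -/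
noncomputable def rho (n : ℕ) (σ : Finset (ℕ × ℕ)) : ℕ :=
  if 1 ∈ fixedPts n σ ∧ n ∈ fixedPts n σ then (tauStar σ).card + 2
  else if 1 ∈ fixedPts n σ ∨ n ∈ fixedPts n σ ∨ (1, n) ∈ σ then (tauStar σ).card + 1
  else (tauStar σ).card

/-- The extraction `σ̃^{(i,i+1)}`: delete the arc `(i,i+1)` together with the points
`i, i+1` and renumber the remaining points. -/
noncomputable def extract (i : ℕ) (σ : Finset (ℕ × ℕ)) : Finset (ℕ × ℕ) :=
  (σ.erase (i, i + 1)).image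
    (fun p => (if p.1 < i then p.1 else p.1 - 2, if p.2 < i then p.2 else p.2 - 2))

/-- `σ₊ₐ`: shift every point of `σ` by `a`. -/
noncomputable def shiftBy (a : ℕ) (σ : Finset (ℕ × ℕ)) : Finset (ℕ × ℕ) :=
  σ.image (fun p => (p.1 + a, p.2 + a))

/-- The projection `π_{a,b}(σ)` renumbered to a link pattern on `1,…,b-a+1`. -/
noncomputable def proj (a b : ℕ) (σ : Finset (ℕ × ℕ)) : Finset (ℕ × ℕ) :=
  (σ.filter (fun p => a ≤ p.1 ∧ p.2 ≤ b)).image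
    (fun p => (p.1 - (a - 1), p.2 - (a - 1)))

/-- The arc `p` lies over the arc `(i,j)`: `p.1 < i < j < p.2`. -/
def ArcOver (p : ℕ × ℕ) (i j : ℕ) : Prop := p.1 < i ∧ j < p.2

/-- The pair of arcs `(i,j),(i',j')` of `σ` is admissible at `[1,n]`. -/
def AdmissiblePair (n : ℕ) (σ : Finset (ℕ × ℕ)) (i j i' j' : ℕ) : Prop :=
  (i, j) ∈ σ ∧ (i', j') ∈ σ ∧
  1 < i ∧ i < j ∧ j < i' ∧ i' < j' ∧ j' < n ∧
  1 ∈ fixedPts n σ ∧ n ∈ fixedPts n σ ∧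
  (∀ f ∈ fixedPts n σ, f ≠ 1 → f ≠ n → j ≤ f ∧ f ≤ i') ∧
  (∀ p ∈ σ, ¬(p.1 < i ∧ i < p.2 ∧ p.2 < j) ∧ ¬(i < p.1 ∧ p.1 < j ∧ j < p.2) ∧
            ¬(p.1 < i' ∧ i' < p.2 ∧ p.2 < j') ∧ ¬(i' < p.1 ∧ p.1 < j' ∧ j' < p.2)) ∧
  (∀ p ∈ σ, (ArcOver p i j ∨ ArcOver p i' j') → (p.1 < i ∧ j' < p.2)) ∧
  (∀ p ∈ σ, ∀ q ∈ σ, (p.1 < i ∧ j' < p.2) → (q.1 < i ∧ j' < q.2) →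
      p.1 < q.1 → q.2 < p.2) ∧
  ((fixedPts n σ).filter (fun f => j ≤ f ∧ f ≤ i')).card *
    (σ.filter (fun p => p.1 < i ∧ j' < p.2)).card = 0

/-!
Every link pattern containing the minimal arc `(i, i+1)` is `reinsert i τ` for a unique pattern
`τ` on `n - 2` points, and `reinsert i` is compatible with everything in sight: it shifts every
`R_{[a,b]}` by the same amount, so it preserves and reflects `≤`, and it maps elementary moves to
elementary moves. Hence the patterns `ω` counted by `a_{σ,υ}` that still contain `(i, i+1)` are
exactly the reinsertions of those counted by `a_{σ̃,υ̃}`. The others are the patterns from which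
`υ` arises by a move creating `(i, i+1)`; they lie below `υ ≤ σ` automatically, and there is
exactly one for each fixed point of `υ` and each other arc of `υ`, i.e. `n - k - 1` of them.
Since `σ` is maximal, `p_σ` exceeds `p_σ̃` by the same `n - k - 1`, so singularity is preserved;
membership in `Sing` is preserved because every pattern above `υ` contains `(i, i+1)` as well.
-/

section Patterns

variable {n : ℕ} {τ ρ : Finset (ℕ × ℕ)}

lemma mem_fixedPts {f : ℕ} :
    f ∈ fixedPts n τ ↔ (1 ≤ f ∧ f ≤ n) ∧ ∀ p ∈ τ, p.1 ≠ f ∧ p.2 ≠ f := by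
  rw [fixedPts, Finset.mem_filter, Finset.mem_Icc]

lemma fixedPts_anti (h : ρ ⊆ τ) : fixedPts n τ ⊆ fixedPts n ρ := fun _ hf =>
  mem_fixedPts.2 ⟨(mem_fixedPts.1 hf).1, fun p hp => (mem_fixedPts.1 hf).2 p (h hp)⟩

lemma mem_fixedPts_insert {a b f : ℕ} (hf : f ∈ fixedPts n τ) (ha : a ≠ f) (hb : b ≠ f) :
    f ∈ fixedPts n (insert (a, b) τ) := by
  refine mem_fixedPts.2 ⟨(mem_fixedPts.1 hf).1, fun p hp => ?_⟩
  rcases Finset.mem_insert.1 hp with rfl | hp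
  · exact ⟨ha, hb⟩
  · exact (mem_fixedPts.1 hf).2 p hp

lemma notMem_of_fst_mem_fixedPts {p : ℕ × ℕ} (hp : p.1 ∈ fixedPts n τ) : p ∉ τ :=
  fun h => ((mem_fixedPts.1 hp).2 p h).1 rfl

lemma notMem_of_snd_mem_fixedPts {p : ℕ × ℕ} (hp : p.2 ∈ fixedPts n τ) : p ∉ τ :=
  fun h => ((mem_fixedPts.1 hp).2 p h).2 rfl

lemma IsLinkPattern.mono (h : IsLinkPattern n τ) (hρ : ρ ⊆ τ) : IsLinkPattern n ρ :=
  ⟨fun p hp => h.1 p (hρ hp), fun p hp q hq => h.2 p (hρ hp) q (hρ hq)⟩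

lemma IsLinkPattern.fst_lt_snd (h : IsLinkPattern n τ) {p : ℕ × ℕ} (hp : p ∈ τ) :
    p.1 < p.2 :=
  (h.1 p hp).2.1

lemma IsLinkPattern.fst_mem_fixedPts_erase (h : IsLinkPattern n τ) {p : ℕ × ℕ} (hp : p ∈ τ) :
    p.1 ∈ fixedPts n (τ.erase p) := by
  obtain ⟨h1, h12, h2⟩ := h.1 p hp
  refine mem_fixedPts.2 ⟨⟨h1, by omega⟩, fun q hq => ?_⟩
  obtain ⟨hne, hq⟩ := Finset.mem_erase.1 hq
  obtain ⟨d1, -, d3, -⟩ := h.2 q hq p hp hne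
  exact ⟨d1, d3⟩

lemma IsLinkPattern.snd_mem_fixedPts_erase (h : IsLinkPattern n τ) {p : ℕ × ℕ} (hp : p ∈ τ) :
    p.2 ∈ fixedPts n (τ.erase p) := by
  obtain ⟨h1, h12, h2⟩ := h.1 p hp
  refine mem_fixedPts.2 ⟨⟨by omega, h2⟩, fun q hq => ?_⟩
  obtain ⟨hne, hq⟩ := Finset.mem_erase.1 hq
  obtain ⟨-, d2, -, d4⟩ := h.2 q hq p hp hne
  exact ⟨d2, d4⟩

lemma isLinkPattern_insert (h : IsLinkPattern n τ) {a b : ℕ} (ha : a ∈ fixedPts n τ)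
    (hb : b ∈ fixedPts n τ) (hab : a < b) : IsLinkPattern n (insert (a, b) τ) := by
  obtain ⟨⟨ha1, -⟩, haτ⟩ := mem_fixedPts.1 ha
  obtain ⟨⟨-, hbn⟩, hbτ⟩ := mem_fixedPts.1 hb
  refine ⟨fun p hp => ?_, fun p hp q hq hpq => ?_⟩
  · rcases Finset.mem_insert.1 hp with rfl | hp
    · exact ⟨ha1, hab, hbn⟩
    · exact h.1 p hp
  rcases Finset.mem_insert.1 hp with rfl | hp <;> rcases Finset.mem_insert.1 hq with rfl | hq
  · exact absurd rfl hpq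
  · have := haτ q hq; have := hbτ q hq; exact ⟨by grind, by grind, by grind, by grind⟩
  · have := haτ p hp; have := hbτ p hp; exact ⟨by grind, by grind, by grind, by grind⟩
  · exact h.2 p hp q hq hpq

lemma card_fixedPts (h : IsLinkPattern n τ) : (fixedPts n τ).card = n - 2 * τ.card := by
  set E := τ.biUnion fun p => {p.1, p.2}
  have hfix : fixedPts n τ = Finset.Icc 1 n \ E := by
    ext f
    simp only [mem_fixedPts, Finset.mem_sdiff, Finset.mem_Icc, E, Finset.mem_biUnion,
      Finset.mem_insert, Finset.mem_singleton]
    grind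
  have hEsub : E ⊆ Finset.Icc 1 n := by
    intro x hx
    simp only [E, Finset.mem_biUnion, Finset.mem_insert, Finset.mem_singleton] at hx
    obtain ⟨p, hp, rfl | rfl⟩ := hx <;> have := h.1 p hp <;>
      exact Finset.mem_Icc.2 ⟨by omega, by omega⟩
  have hEcard : E.card = 2 * τ.card := by
    rw [Finset.card_biUnion, Finset.sum_const_nat fun p hp => Finset.card_pair (h.fst_lt_snd hp).ne,
      mul_comm]
    intro p hp q hq hpq
    have := h.2 p hp q hq hpq
    simp only [Function.onFun, Finset.disjoint_insert_left, Finset.disjoint_insert_right,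
      Finset.disjoint_singleton, Finset.mem_insert, Finset.mem_singleton]
    grind
  rw [hfix, Finset.card_sdiff_of_subset hEsub, Nat.card_Icc, hEcard, Nat.add_sub_cancel]

lemma mem_allSub (h : IsLinkPattern n τ) : τ ∈ allSub n :=
  Finset.mem_powerset.2 fun p hp => by
    have := h.1 p hp
    exact Finset.mem_product.2 ⟨Finset.mem_Icc.2 ⟨this.1, by omega⟩,
      Finset.mem_Icc.2 ⟨by omega, this.2.2⟩⟩

lemma RInt_insert {p : ℕ × ℕ} (hp : p ∉ τ) (a b : ℕ) :
    RInt (insert p τ) a b = (if a ≤ p.1 ∧ p.2 ≤ b then 1 else 0) + RInt τ a b := by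
  unfold RInt
  rw [Finset.filter_insert]
  split_ifs
  · rw [Finset.card_insert_of_notMem fun h => hp (Finset.mem_of_mem_filter _ h), add_comm]
  · rw [zero_add]

lemma RInt_eq_zero_of_le (h : IsLinkPattern n τ) {a b : ℕ} (hba : b ≤ a) : RInt τ a b = 0 :=
  Finset.card_eq_zero.2 <| Finset.filter_eq_empty_iff.2 fun p hp hab =>
    absurd (h.fst_lt_snd hp) (by omega)

lemma lpLE_trans {υ ω : Finset (ℕ × ℕ)} (h₁ : lpLE n ω υ) (h₂ : lpLE n υ τ) : lpLE n ω τ :=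
  fun a b ha hab hbn => (h₁ a b ha hab hbn).trans (h₂ a b ha hab hbn)

lemma minArc_mem_of_lpLE {υ : Finset (ℕ × ℕ)} (hτ : IsLinkPattern n τ) {j : ℕ} (hj : (j, j + 1) ∈ υ)
    (hj1 : 1 ≤ j) (hjn : j + 1 ≤ n) (hle : lpLE n υ τ) : (j, j + 1) ∈ τ := by
  have hυj : 0 < RInt υ j (j + 1) := Finset.card_pos.2 ⟨_, Finset.mem_filter.2 ⟨hj, le_rfl, le_rfl⟩⟩
  obtain ⟨p, hp⟩ := Finset.card_pos.1 (hυj.trans_le (hle j (j + 1) hj1 (by omega) hjn))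
  obtain ⟨hp, h1, h2⟩ := Finset.mem_filter.1 hp
  have := hτ.fst_lt_snd hp
  rwa [show p = (j, j + 1) from Prod.ext (by omega) (by omega)] at hp

end Patterns

section Moves

variable {n : ℕ} {R σ σ' : Finset (ℕ × ℕ)}

lemma notMem_insert_of_mem_fixedPts {a b c d : ℕ} (ha : a ∈ fixedPts n R) (hac : a ≠ c) :
    (a, b) ∉ insert (c, d) R := by
  simp [hac, notMem_of_fst_mem_fixedPts (p := (a, b)) ha]

lemma isPredecessor_of_bridge {i f j : ℕ} (hi : i ∈ fixedPts n R) (hf : f ∈ fixedPts n R)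
    (hif : i < f) (hfj : f < j) :
    IsPredecessor n (insert (i, f) R) (insert (i, j) R) ∧
      IsPredecessor n (insert (f, j) R) (insert (i, j) R) := by
  have hf' : f ∈ fixedPts n (insert (i, j) R) := mem_fixedPts_insert hf hif.ne hfj.ne'
  have hR : (insert (i, j) R).erase (i, j) = R :=
    Finset.erase_insert (notMem_of_fst_mem_fixedPts (p := (i, j)) hi)
  exact ⟨Or.inl ⟨i, j, f, Finset.mem_insert_self _ _, hf', hif, hfj, Or.inl (by rw [hR])⟩,
    Or.inl ⟨i, j, f, Finset.mem_insert_self _ _, hf', hif, hfj, Or.inr (by rw [hR])⟩⟩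

lemma isPredecessor_of_cross {i l j m : ℕ} (hi : i ∈ fixedPts n R) (hl : l ∈ fixedPts n R)
    (hil : i < l) (hlj : l < j) (hjm : j < m) :
    IsPredecessor n (insert (i, l) (insert (j, m) R)) (insert (i, j) (insert (l, m) R)) ∧
      IsPredecessor n (insert (i, m) (insert (l, j) R)) (insert (i, j) (insert (l, m) R)) := by
  have hR : ((insert (i, j) (insert (l, m) R)).erase (i, j)).erase (l, m) = R := by
    rw [Finset.erase_insert (notMem_insert_of_mem_fixedPts hi hil.ne),
      Finset.erase_insert (notMem_of_fst_mem_fixedPts (p := (l, m)) hl)]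
  have hij := Finset.mem_insert_self (i, j) (insert (l, m) R)
  have hlm : (l, m) ∈ insert (i, j) (insert (l, m) R) :=
    Finset.mem_insert_of_mem (Finset.mem_insert_self _ _)
  exact ⟨Or.inr ⟨i, j, l, m, hij, hlm, hil, hlj, hjm, Or.inl (by rw [hR])⟩,
    Or.inr ⟨i, j, l, m, hij, hlm, hil, hlj, hjm, Or.inr (by rw [hR])⟩⟩

lemma IsPredecessor.exists_eq_insert (hσ : IsLinkPattern n σ) (h : IsPredecessor n σ' σ) :
    (∃ R i f j, i ∈ fixedPts n R ∧ f ∈ fixedPts n R ∧ j ∈ fixedPts n R ∧ i < f ∧ f < j ∧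
      σ = insert (i, j) R ∧ (σ' = insert (i, f) R ∨ σ' = insert (f, j) R)) ∨
    (∃ R i l j m, i ∈ fixedPts n R ∧ l ∈ fixedPts n R ∧ j ∈ fixedPts n R ∧
      m ∈ fixedPts n R ∧ i < l ∧ l < j ∧ j < m ∧ σ = insert (i, j) (insert (l, m) R) ∧
      (σ' = insert (i, l) (insert (j, m) R) ∨ σ' = insert (i, m) (insert (l, j) R))) := by
  rcases h with ⟨i, j, f, hij, hf, hif, hfj, hσ'⟩ | ⟨i, j, l, m, hij, hlm, hil, hlj, hjm, hσ'⟩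
  · refine Or.inl ⟨σ.erase (i, j), i, f, j, hσ.fst_mem_fixedPts_erase hij,
      fixedPts_anti (Finset.erase_subset _ _) hf, hσ.snd_mem_fixedPts_erase hij, hif, hfj,
      (Finset.insert_erase hij).symm, hσ'⟩
  · have hS := hσ.mono (Finset.erase_subset (i, j) σ)
    have hlm' : (l, m) ∈ σ.erase (i, j) := Finset.mem_erase.2 ⟨by grind, hlm⟩
    have hanti := fixedPts_anti (n := n) (Finset.erase_subset (l, m) (σ.erase (i, j)))
    refine Or.inr ⟨(σ.erase (i, j)).erase (l, m), i, l, j, m,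
      hanti (hσ.fst_mem_fixedPts_erase hij), hS.fst_mem_fixedPts_erase hlm',
      hanti (hσ.snd_mem_fixedPts_erase hij), hS.snd_mem_fixedPts_erase hlm', hil, hlj, hjm,
      by rw [Finset.insert_erase hlm', Finset.insert_erase hij], hσ'⟩

lemma card_insert_insert_of_mem_fixedPts {a b c d : ℕ} (ha : a ∈ fixedPts n R)
    (hc : c ∈ fixedPts n R) (hac : a ≠ c) :
    (insert (a, b) (insert (c, d) R)).card = R.card + 2 := by
  rw [Finset.card_insert_of_notMem (notMem_insert_of_mem_fixedPts ha hac),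
    Finset.card_insert_of_notMem (notMem_of_fst_mem_fixedPts (p := (c, d)) hc)]

lemma RInt_insert_insert_of_mem_fixedPts {a b c d : ℕ} (ha : a ∈ fixedPts n R)
    (hc : c ∈ fixedPts n R) (hac : a ≠ c) (x y : ℕ) :
    RInt (insert (a, b) (insert (c, d) R)) x y = (if x ≤ a ∧ b ≤ y then 1 else 0) +
      (if x ≤ c ∧ d ≤ y then 1 else 0) + RInt R x y := by
  rw [RInt_insert (notMem_insert_of_mem_fixedPts ha hac),
    RInt_insert (notMem_of_fst_mem_fixedPts (p := (c, d)) hc), add_assoc]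

lemma IsPredecessor.card_eq (hσ : IsLinkPattern n σ) (h : IsPredecessor n σ' σ) :
    σ'.card = σ.card := by
  rcases h.exists_eq_insert hσ with
    ⟨R, i, f, j, hi, hf, -, -, -, rfl, rfl | rfl⟩ |
    ⟨R, i, l, j, m, hi, hl, hj, -, hil, hlj, -, rfl, rfl | rfl⟩
  · rw [Finset.card_insert_of_notMem (notMem_of_fst_mem_fixedPts (p := (i, f)) hi),
      Finset.card_insert_of_notMem (notMem_of_fst_mem_fixedPts (p := (i, j)) hi)]
  · rw [Finset.card_insert_of_notMem (notMem_of_fst_mem_fixedPts (p := (f, j)) hf),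
      Finset.card_insert_of_notMem (notMem_of_fst_mem_fixedPts (p := (i, j)) hi)]
  all_goals rw [card_insert_insert_of_mem_fixedPts hi hl hil.ne,
    card_insert_insert_of_mem_fixedPts hi (by assumption) (by omega)]

lemma IsPredecessor.RInt_le (hσ : IsLinkPattern n σ) (h : IsPredecessor n σ' σ) (a b : ℕ) :
    RInt σ a b ≤ RInt σ' a b := by
  rcases h.exists_eq_insert hσ with
    ⟨R, i, f, j, hi, hf, -, hif, hfj, rfl, rfl | rfl⟩ |
    ⟨R, i, l, j, m, hi, hl, hj, -, hil, hlj, hjm, rfl, rfl | rfl⟩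
  · rw [RInt_insert (notMem_of_fst_mem_fixedPts (p := (i, f)) hi),
      RInt_insert (notMem_of_fst_mem_fixedPts (p := (i, j)) hi)]
    split_ifs <;> omega
  · rw [RInt_insert (notMem_of_fst_mem_fixedPts (p := (f, j)) hf),
      RInt_insert (notMem_of_fst_mem_fixedPts (p := (i, j)) hi)]
    split_ifs <;> omega
  all_goals
    rw [RInt_insert_insert_of_mem_fixedPts hi hl hil.ne,
      RInt_insert_insert_of_mem_fixedPts hi (by assumption) (by omega)]
    split_ifs <;> omega

lemma IsPredecessor.lpLE (hσ : IsLinkPattern n σ) (h : IsPredecessor n σ' σ) : lpLE n σ σ' :=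
  fun a b _ _ _ => h.RInt_le hσ a b

lemma IsPredecessor.minArc_mem {j : ℕ} (hσ : IsLinkPattern n σ) (h : IsPredecessor n σ' σ)
    (hj : (j, j + 1) ∈ σ) : (j, j + 1) ∈ σ' := by
  rcases h.exists_eq_insert hσ with
    ⟨R, i, f, k, -, -, -, hif, hfk, rfl, rfl | rfl⟩ |
    ⟨R, i, l, k, m, -, -, -, -, hil, hlk, hkm, rfl, rfl | rfl⟩ <;>
  simp only [Finset.mem_insert, Prod.mk.injEq] at hj ⊢ <;> grind

end Moves

section Reinsert

def raise (i x : ℕ) : ℕ := if x < i then x else x + 2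

def raiseArc (i : ℕ) (p : ℕ × ℕ) : ℕ × ℕ := (raise i p.1, raise i p.2)

def reinsert (i : ℕ) (τ : Finset (ℕ × ℕ)) : Finset (ℕ × ℕ) :=
  insert (i, i + 1) (τ.image (raiseArc i))

variable {n i : ℕ} {τ τ₁ τ₂ : Finset (ℕ × ℕ)}

lemma raise_strictMono : StrictMono (raise i) := fun x y h => by
  unfold raise; split_ifs <;> omega

lemma raiseArc_injective : Function.Injective (raiseArc i) := fun p q h => by
  simp only [raiseArc, Prod.mk.injEq, raise_strictMono.injective.eq_iff] at h
  exact Prod.ext h.1 h.2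

lemma raise_ne_self (x : ℕ) : raise i x ≠ i := by unfold raise; split_ifs <;> omega

lemma raise_ne_succ (x : ℕ) : raise i x ≠ i + 1 := by unfold raise; split_ifs <;> omega

lemma exists_raise_eq {x : ℕ} (h₁ : x ≠ i) (h₂ : x ≠ i + 1) : ∃ y, raise i y = x :=
  ⟨if x < i then x else x - 2, by unfold raise; split_ifs <;> omega⟩

lemma minArc_notMem_image_raiseArc : (i, i + 1) ∉ τ.image (raiseArc i) := by
  simp [raiseArc, raise_ne_self]

lemma raiseArc_mem_reinsert {a b : ℕ} (h : (a, b) ∈ τ) :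
    (raise i a, raise i b) ∈ reinsert i τ :=
  Finset.mem_insert_of_mem (Finset.mem_image_of_mem (raiseArc i) h)

lemma exists_raise_of_mem_reinsert {a b : ℕ} (h : (a, b) ∈ reinsert i τ)
    (hne : (a, b) ≠ (i, i + 1)) : ∃ a' b', (a', b') ∈ τ ∧ raise i a' = a ∧ raise i b' = b := by
  obtain ⟨⟨a', b'⟩, h, he⟩ := Finset.mem_image.1 ((Finset.mem_insert.1 h).resolve_left hne)
  exact ⟨a', b', h, Prod.ext_iff.1 he⟩

lemma reinsert_insert (p : ℕ × ℕ) (τ : Finset (ℕ × ℕ)) :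
    reinsert i (insert p τ) = insert (raiseArc i p) (reinsert i τ) := by
  rw [reinsert, reinsert, Finset.image_insert, Finset.insert_comm]

lemma reinsert_erase (p : ℕ × ℕ) (τ : Finset (ℕ × ℕ)) :
    reinsert i (τ.erase p) = (reinsert i τ).erase (raiseArc i p) := by
  rw [reinsert, reinsert, Finset.image_erase raiseArc_injective,
    Finset.erase_insert_of_ne fun h => raise_ne_self p.1 (congrArg Prod.fst h).symm]

lemma extract_reinsert (i : ℕ) (τ : Finset (ℕ × ℕ)) : extract i (reinsert i τ) = τ := by
  rw [extract, reinsert, Finset.erase_insert minArc_notMem_image_raiseArc, Finset.image_image]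
  refine (Finset.image_congr fun p _ => ?_).trans Finset.image_id
  ext <;> simp [raiseArc, raise] <;> split_ifs <;> omega

lemma reinsert_injective : Function.Injective (reinsert i) :=
  Function.LeftInverse.injective (extract_reinsert i)

lemma reinsert_extract (hτ : IsLinkPattern n τ) (hi : (i, i + 1) ∈ τ) :
    reinsert i (extract i τ) = τ := by
  rw [reinsert, extract, Finset.image_image, Finset.image_congr, Finset.image_id,
    Finset.insert_erase hi]
  intro p hp
  obtain ⟨hne, hp⟩ := Finset.mem_erase.1 (Finset.mem_coe.1 hp)
  have := hτ.2 p hp _ hi hne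
  ext <;> simp [raiseArc, raise] <;> split_ifs <;> omega

lemma exists_reinsert_eq (hτ : IsLinkPattern n τ) (hi : (i, i + 1) ∈ τ) :
    ∃ τ', reinsert i τ' = τ :=
  ⟨_, reinsert_extract hτ hi⟩

lemma card_reinsert (i : ℕ) (τ : Finset (ℕ × ℕ)) : (reinsert i τ).card = τ.card + 1 := by
  rw [reinsert, Finset.card_insert_of_notMem minArc_notMem_image_raiseArc,
    Finset.card_image_of_injective _ raiseArc_injective]

lemma one_le_raise_iff (hi : 1 ≤ i) {x : ℕ} : 1 ≤ raise i x ↔ 1 ≤ x := by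
  unfold raise; split_ifs <;> omega

lemma raise_le_iff (hi : 1 ≤ i) (hin : i + 1 ≤ n) {x : ℕ} : raise i x ≤ n ↔ x ≤ n - 2 := by
  unfold raise; split_ifs <;> omega

lemma isLinkPattern_image_raiseArc_iff (hi : 1 ≤ i) (hin : i + 1 ≤ n) :
    IsLinkPattern n (τ.image (raiseArc i)) ↔ IsLinkPattern (n - 2) τ := by
  simp only [IsLinkPattern, Finset.forall_mem_image, raiseArc, ne_eq, Prod.ext_iff,
    raise_strictMono.injective.eq_iff, raise_strictMono.lt_iff_lt, one_le_raise_iff hi,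
    raise_le_iff hi hin]

lemma isLinkPattern_reinsert_iff (hi : 1 ≤ i) (hin : i + 1 ≤ n) :
    IsLinkPattern n (reinsert i τ) ↔ IsLinkPattern (n - 2) τ := by
  rw [← isLinkPattern_image_raiseArc_iff hi hin]
  refine ⟨fun h => h.mono (Finset.subset_insert _ _), fun h => isLinkPattern_insert h ?_ ?_ ?_⟩
  · exact mem_fixedPts.2 ⟨⟨hi, by omega⟩, Finset.forall_mem_image.2 fun _ _ =>
      ⟨raise_ne_self _, raise_ne_self _⟩⟩
  · exact mem_fixedPts.2 ⟨⟨by omega, hin⟩, Finset.forall_mem_image.2 fun _ _ =>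
      ⟨raise_ne_succ _, raise_ne_succ _⟩⟩
  · exact lt_add_one i

lemma fixedPts_reinsert (hi : 1 ≤ i) (hin : i + 1 ≤ n) :
    fixedPts n (reinsert i τ) = (fixedPts (n - 2) τ).image (raise i) := by
  have key : ∀ x, raise i x ∈ fixedPts n (reinsert i τ) ↔ x ∈ fixedPts (n - 2) τ := fun x => by
    simp only [mem_fixedPts, one_le_raise_iff hi, raise_le_iff hi hin, reinsert,
      Finset.forall_mem_insert, Finset.forall_mem_image, raiseArc, ne_eq,
      raise_strictMono.injective.eq_iff, eq_comm (a := i), eq_comm (a := i + 1), raise_ne_self,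
      raise_ne_succ, not_false_eq_true, true_and]
  ext f
  constructor
  · intro hf
    have hfi := (mem_fixedPts.1 hf).2 _ (Finset.mem_insert_self (i, i + 1) _)
    obtain ⟨x, rfl⟩ := exists_raise_eq hfi.1.symm hfi.2.symm
    exact Finset.mem_image_of_mem _ ((key x).1 hf)
  · intro hf
    obtain ⟨x, hx, rfl⟩ := Finset.mem_image.1 hf
    exact (key x).2 hx

lemma reinsert_eq_insert_erase_iff {a b x y : ℕ} :
    reinsert i τ₁ = insert (raise i a, raise i b) ((reinsert i τ₂).erase (raise i x, raise i y)) ↔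
      τ₁ = insert (a, b) (τ₂.erase (x, y)) := by
  have h : reinsert i (insert (a, b) (τ₂.erase (x, y))) =
      insert (raise i a, raise i b) ((reinsert i τ₂).erase (raise i x, raise i y)) := by
    rw [reinsert_insert, reinsert_erase]
    rfl
  rw [← h, reinsert_injective.eq_iff]

lemma reinsert_eq_insert_insert_erase_erase_iff {a b c d x y z w : ℕ} :
    reinsert i τ₁ = insert (raise i a, raise i b) (insert (raise i c, raise i d)
      (((reinsert i τ₂).erase (raise i x, raise i y)).erase (raise i z, raise i w))) ↔
      τ₁ = insert (a, b) (insert (c, d) ((τ₂.erase (x, y)).erase (z, w))) := by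
  have h : reinsert i (insert (a, b) (insert (c, d) ((τ₂.erase (x, y)).erase (z, w)))) =
      insert (raise i a, raise i b) (insert (raise i c, raise i d)
        (((reinsert i τ₂).erase (raise i x, raise i y)).erase (raise i z, raise i w))) := by
    rw [reinsert_insert, reinsert_insert, reinsert_erase, reinsert_erase]
    rfl
  rw [← h, reinsert_injective.eq_iff]

lemma isPredecessor_reinsert_iff (hi : 1 ≤ i) (hin : i + 1 ≤ n) :
    IsPredecessor n (reinsert i τ₁) (reinsert i τ₂) ↔ IsPredecessor (n - 2) τ₁ τ₂ := by
  have hmono := raise_strictMono (i := i)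
  constructor
  · rintro (⟨x, y, f, hxy, hf, hxf, hfy, h⟩ | ⟨a, b, c, d, hab, hcd, hac, hcb, hbd, h⟩)
    · rw [fixedPts_reinsert hi hin] at hf
      obtain ⟨f, hf', rfl⟩ := Finset.mem_image.1 hf
      obtain ⟨x, y, hxy', rfl, rfl⟩ := exists_raise_of_mem_reinsert hxy (by grind)
      exact Or.inl ⟨x, y, f, hxy', hf', hmono.lt_iff_lt.1 hxf, hmono.lt_iff_lt.1 hfy,
        h.imp reinsert_eq_insert_erase_iff.1 reinsert_eq_insert_erase_iff.1⟩
    · obtain ⟨a, b, hab', rfl, rfl⟩ := exists_raise_of_mem_reinsert hab (by grind)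
      obtain ⟨c, d, hcd', rfl, rfl⟩ := exists_raise_of_mem_reinsert hcd (by grind)
      exact Or.inr ⟨a, b, c, d, hab', hcd', hmono.lt_iff_lt.1 hac, hmono.lt_iff_lt.1 hcb,
        hmono.lt_iff_lt.1 hbd, h.imp reinsert_eq_insert_insert_erase_erase_iff.1
          reinsert_eq_insert_insert_erase_erase_iff.1⟩
  · rintro (⟨x, y, f, hxy, hf, hxf, hfy, h⟩ | ⟨a, b, c, d, hab, hcd, hac, hcb, hbd, h⟩)
    · refine Or.inl ⟨raise i x, raise i y, raise i f, raiseArc_mem_reinsert hxy, ?_, hmono hxf,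
        hmono hfy, h.imp reinsert_eq_insert_erase_iff.2 reinsert_eq_insert_erase_iff.2⟩
      rw [fixedPts_reinsert hi hin]
      exact Finset.mem_image_of_mem _ hf
    · exact Or.inr ⟨raise i a, raise i b, raise i c, raise i d, raiseArc_mem_reinsert hab,
        raiseArc_mem_reinsert hcd, hmono hac, hmono hcb, hmono hbd,
        h.imp reinsert_eq_insert_insert_erase_erase_iff.2
          reinsert_eq_insert_insert_erase_erase_iff.2⟩

/-- `[pullLeft i a, pullRight i b]` is the preimage of `[a, b]` under `raise i`. -/
def pullLeft (i a : ℕ) : ℕ := if a ≤ i then a else if a = i + 1 then i else a - 2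

def pullRight (i b : ℕ) : ℕ := if b < i then b else if b = i then i - 1 else b - 2

lemma le_raise_iff {a u : ℕ} : a ≤ raise i u ↔ pullLeft i a ≤ u := by
  unfold raise pullLeft; split_ifs <;> omega

lemma raise_le_iff_le_pullRight (hi : 1 ≤ i) {b v : ℕ} : raise i v ≤ b ↔ v ≤ pullRight i b := by
  unfold raise pullRight; split_ifs <;> omega

lemma RInt_reinsert (hi : 1 ≤ i) (τ : Finset (ℕ × ℕ)) (a b : ℕ) :
    RInt (reinsert i τ) a b =
      (if a ≤ i ∧ i + 1 ≤ b then 1 else 0) + RInt τ (pullLeft i a) (pullRight i b) := by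
  rw [reinsert, RInt_insert minArc_notMem_image_raiseArc]
  congr 1
  rw [RInt, Finset.filter_image, Finset.card_image_of_injective _ raiseArc_injective, RInt]
  simp only [raiseArc, le_raise_iff, raise_le_iff_le_pullRight hi]

lemma lpLE_reinsert_iff {σ υ : Finset (ℕ × ℕ)} (hυ : IsLinkPattern (n - 2) υ) (hi : 1 ≤ i)
    (hin : i + 1 ≤ n) : lpLE n (reinsert i υ) (reinsert i σ) ↔ lpLE (n - 2) υ σ := by
  constructor
  · intro hle a b ha hab hbn
    have h := hle (raise i a) (raise i b) ((one_le_raise_iff hi).2 ha) (raise_strictMono hab)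
      ((raise_le_iff hi hin).2 hbn)
    have hl : pullLeft i (raise i a) = a := by unfold pullLeft raise; split_ifs <;> omega
    have hr : pullRight i (raise i b) = b := by unfold pullRight raise; split_ifs <;> omega
    rwa [RInt_reinsert hi, RInt_reinsert hi, hl, hr, add_le_add_iff_left] at h
  · intro hle a b ha hab hbn
    rw [RInt_reinsert hi, RInt_reinsert hi, add_le_add_iff_left]
    by_cases hlt : pullLeft i a < pullRight i b
    · exact hle _ _ (by unfold pullLeft; split_ifs <;> omega) hlt
        (by unfold pullRight; split_ifs <;> omega)
    · rw [RInt_eq_zero_of_le hυ (not_lt.1 hlt)]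
      exact Nat.zero_le _

lemma bridges_le_bridges_reinsert (hi : 1 ≤ i) (hin : i + 1 ≤ n) (τ : Finset (ℕ × ℕ)) :
    bridges (n - 2) τ ≤ bridges n (reinsert i τ) := by
  refine Finset.card_le_card_of_injOn (Prod.map (raiseArc i) (raise i)) ?_
    (raiseArc_injective.prodMap raise_strictMono.injective).injOn
  rintro ⟨⟨a, b⟩, f⟩ h
  simp only [Finset.coe_filter, Set.mem_ofPred_eq, Finset.mem_product] at h ⊢
  refine ⟨⟨raiseArc_mem_reinsert h.1.1, ?_⟩, raise_strictMono h.2.1, raise_strictMono h.2.2⟩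
  rw [fixedPts_reinsert hi hin]
  exact Finset.mem_image_of_mem _ h.1.2

lemma crossings_le_crossings_reinsert (τ : Finset (ℕ × ℕ)) :
    crossings τ ≤ crossings (reinsert i τ) := by
  refine Finset.card_le_card_of_injOn (Prod.map (raiseArc i) (raiseArc i)) ?_
    (raiseArc_injective.prodMap raiseArc_injective).injOn
  rintro ⟨⟨a, b⟩, ⟨c, d⟩⟩ h
  simp only [Finset.coe_filter, Set.mem_ofPred_eq, Finset.mem_product] at h ⊢
  exact ⟨⟨raiseArc_mem_reinsert h.1.1, raiseArc_mem_reinsert h.1.2⟩, raise_strictMono h.2.1,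
    raise_strictMono h.2.2.1, raise_strictMono h.2.2.2⟩

end Reinsert

section Opening

/-- The patterns from which `υ` arises by an elementary move creating the arc `(i, i+1)`: a
bridge over the fixed point `f`, or one of two crossing arcs on the endpoints of `(x, y)`
and `i, i+1`. -/
def opening (i : ℕ) (υ : Finset (ℕ × ℕ)) : ℕ ⊕ (ℕ × ℕ) → Finset (ℕ × ℕ)
  | .inl f => insert (if f < i then (f, i + 1) else (i, f)) (υ.erase (i, i + 1))
  | .inr (x, y) =>
    if y < i then insert (x, i) (insert (y, i + 1) ((υ.erase (i, i + 1)).erase (x, y)))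
    else if i + 1 < x then insert (i, x) (insert (i + 1, y) ((υ.erase (i, i + 1)).erase (x, y)))
    else insert (x, i + 1) (insert (i, y) ((υ.erase (i, i + 1)).erase (x, y)))

variable {n i : ℕ} {υ ω R : Finset (ℕ × ℕ)}

lemma isLinkPattern_insert_cross (hR : IsLinkPattern n R) {a b c d : ℕ}
    (ha : a ∈ fixedPts n R) (hb : b ∈ fixedPts n R) (hc : c ∈ fixedPts n R)
    (hd : d ∈ fixedPts n R) (hab : a < b) (hbc : b < c) (hcd : c < d) :
    IsLinkPattern n (insert (a, c) (insert (b, d) R)) :=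
  isLinkPattern_insert (isLinkPattern_insert hR hb hd (by omega))
    (mem_fixedPts_insert ha (by omega) (by omega)) (mem_fixedPts_insert hc (by omega) (by omega))
    (by omega)

lemma opening_inl_spec (hυ : IsLinkPattern n υ) (hi : (i, i + 1) ∈ υ) {f : ℕ}
    (hf : f ∈ fixedPts n υ) :
    IsLinkPattern n (opening i υ (.inl f)) ∧ IsPredecessor n υ (opening i υ (.inl f)) ∧
      (i, i + 1) ∉ opening i υ (.inl f) := by
  simp only [opening]
  set R := υ.erase (i, i + 1)
  have hR := hυ.mono (Finset.erase_subset (i, i + 1) υ)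
  have hiR : i ∈ fixedPts n R := hυ.fst_mem_fixedPts_erase hi
  have hi1R : i + 1 ∈ fixedPts n R := hυ.snd_mem_fixedPts_erase hi
  have hfR : f ∈ fixedPts n R := fixedPts_anti (Finset.erase_subset _ _) hf
  have hfi := (mem_fixedPts.1 hf).2 _ hi
  have hυR : υ = insert (i, i + 1) R := (Finset.insert_erase hi).symm
  have harc : (i, i + 1) ∉ R := Finset.notMem_erase _ _
  split_ifs with hfi'
  · refine ⟨isLinkPattern_insert hR hfR hi1R (by omega), ?_, ?_⟩
    · rw [hυR]
      exact (isPredecessor_of_bridge hfR hiR hfi' (lt_add_one i)).2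
    · simp only [Finset.mem_insert, Prod.mk.injEq, not_or]
      exact ⟨by omega, harc⟩
  · refine ⟨isLinkPattern_insert hR hiR hfR (by omega), ?_, ?_⟩
    · rw [hυR]
      exact (isPredecessor_of_bridge hiR hi1R (lt_add_one i) (by omega)).1
    · simp only [Finset.mem_insert, Prod.mk.injEq, not_or]
      exact ⟨by omega, harc⟩

lemma opening_inr_spec (hυ : IsLinkPattern n υ) (hi : (i, i + 1) ∈ υ) {w : ℕ × ℕ}
    (hw : w ∈ υ.erase (i, i + 1)) :
    IsLinkPattern n (opening i υ (.inr w)) ∧ IsPredecessor n υ (opening i υ (.inr w)) ∧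
      (i, i + 1) ∉ opening i υ (.inr w) := by
  obtain ⟨x, y⟩ := w
  simp only [opening]
  have hS := hυ.mono (Finset.erase_subset (i, i + 1) υ)
  set R := (υ.erase (i, i + 1)).erase (x, y)
  have hR := hS.mono (Finset.erase_subset (x, y) _)
  have hanti := fixedPts_anti (n := n) (Finset.erase_subset (x, y) (υ.erase (i, i + 1)))
  have hiR : i ∈ fixedPts n R := hanti (hυ.fst_mem_fixedPts_erase hi)
  have hi1R : i + 1 ∈ fixedPts n R := hanti (hυ.snd_mem_fixedPts_erase hi)
  have hxR : x ∈ fixedPts n R := hS.fst_mem_fixedPts_erase hw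
  have hyR : y ∈ fixedPts n R := hS.snd_mem_fixedPts_erase hw
  have hxy := hS.fst_lt_snd hw
  obtain ⟨hne, hwυ⟩ := Finset.mem_erase.1 hw
  have hdisj := hυ.2 _ hwυ _ hi hne
  simp only at hdisj
  have hυR : υ = insert (i, i + 1) (insert (x, y) R) := by
    rw [Finset.insert_erase hw, Finset.insert_erase hi]
  have harc : (i, i + 1) ∉ R := fun h =>
    (Finset.mem_erase.1 (Finset.mem_of_mem_erase h)).1 rfl
  split_ifs with hyi hxi
  · refine ⟨isLinkPattern_insert_cross hR hxR hyR hiR hi1R hxy hyi (lt_add_one i), ?_, ?_⟩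
    · rw [hυR, Finset.insert_comm]
      exact (isPredecessor_of_cross hxR hyR hxy hyi (lt_add_one i)).1
    · simp only [Finset.mem_insert, Prod.mk.injEq, not_or]
      exact ⟨by omega, by omega, harc⟩
  · refine ⟨isLinkPattern_insert_cross hR hiR hi1R hxR hyR (lt_add_one i) hxi hxy, ?_, ?_⟩
    · rw [hυR]
      exact (isPredecessor_of_cross hiR hi1R (lt_add_one i) hxi hxy).1
    · simp only [Finset.mem_insert, Prod.mk.injEq, not_or]
      exact ⟨by omega, by omega, harc⟩
  · refine ⟨isLinkPattern_insert_cross hR hxR hiR hi1R hyR (by omega) (lt_add_one i) (by omega),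
      ?_, ?_⟩
    · rw [hυR, Finset.insert_comm]
      exact (isPredecessor_of_cross hxR hiR (by omega) (lt_add_one i) (by omega)).2
    · simp only [Finset.mem_insert, Prod.mk.injEq, not_or]
      exact ⟨by omega, by omega, harc⟩

lemma notMem_opening_inr (hυ : IsLinkPattern n υ) (hi : (i, i + 1) ∈ υ) {w : ℕ × ℕ}
    (hw : w ∈ υ.erase (i, i + 1)) : w ∉ opening i υ (.inr w) := by
  obtain ⟨x, y⟩ := w
  obtain ⟨hne, hwυ⟩ := Finset.mem_erase.1 hw
  have hdisj := hυ.2 _ hwυ _ hi hne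
  simp only at hdisj
  simp only [opening]
  split_ifs <;> simp only [Finset.mem_insert, Prod.mk.injEq, Finset.notMem_erase, or_false] <;>
    omega

lemma opening_injOn (hυ : IsLinkPattern n υ) (hi : (i, i + 1) ∈ υ) :
    Set.InjOn (opening i υ) ((fixedPts n υ).disjSum (υ.erase (i, i + 1))) := by
  have hiS : i ∈ fixedPts n (υ.erase (i, i + 1)) := hυ.fst_mem_fixedPts_erase hi
  have hi1S : i + 1 ∈ fixedPts n (υ.erase (i, i + 1)) := hυ.snd_mem_fixedPts_erase hi
  have hsub : ∀ w s, s ≠ .inr w → w ∈ υ.erase (i, i + 1) → w ∈ opening i υ s := by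
    rintro w (f | ⟨x, y⟩) hs hw
    · exact Finset.mem_insert_of_mem hw
    · have : w ∈ (υ.erase (i, i + 1)).erase (x, y) := Finset.mem_erase.2 ⟨by grind, hw⟩
      simp only [opening]
      split_ifs <;> exact Finset.mem_insert_of_mem (Finset.mem_insert_of_mem this)
  rintro (f₁ | w₁) h₁ (f₂ | w₂) h₂ h
  · simp only [Finset.mem_coe, Finset.inl_mem_disjSum] at h₁ h₂
    have h₁i := (mem_fixedPts.1 h₁).2 _ hi
    have h₂i := (mem_fixedPts.1 h₂).2 _ hi
    simp only at h₁i h₂i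
    have hnew : (if f₁ < i then (f₁, i + 1) else (i, f₁)) ∉ υ.erase (i, i + 1) := by
      split_ifs
      exacts [notMem_of_snd_mem_fixedPts hi1S, notMem_of_fst_mem_fixedPts hiS]
    simp only [opening] at h
    rw [Finset.insert_inj hnew] at h
    split_ifs at h <;> simp only [Prod.mk.injEq] at h <;> grind
  · simp only [Finset.mem_coe, Finset.inr_mem_disjSum] at h₂
    exact absurd (h ▸ hsub w₂ _ (by simp) h₂) (notMem_opening_inr hυ hi h₂)
  · simp only [Finset.mem_coe, Finset.inr_mem_disjSum] at h₁
    exact absurd (h ▸ hsub w₁ _ (by simp) h₁) (notMem_opening_inr hυ hi h₁)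
  · simp only [Finset.mem_coe, Finset.inr_mem_disjSum] at h₁ h₂
    by_contra hne
    exact notMem_opening_inr hυ hi h₂ (h ▸ hsub w₂ _ (by simpa [eq_comm] using hne) h₂)

lemma exists_opening_eq_of_cross {a b c d : ℕ} (ha : a ∈ fixedPts n R) (hb : b ∈ fixedPts n R)
    (hac : a < c) (hcb : c < b) (hbd : b < d) (hR : (i, i + 1) ∉ R) (hi : (i, i + 1) ∈ υ)
    (hυ : υ = insert (a, c) (insert (b, d) R) ∨ υ = insert (a, d) (insert (c, b) R)) :
    ∃ s ∈ (fixedPts n υ).disjSum (υ.erase (i, i + 1)),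
      opening i υ s = insert (a, b) (insert (c, d) R) := by
  rcases hυ with rfl | rfl <;>
  simp only [Finset.mem_insert, Prod.mk.injEq, hR, or_false] at hi
  · rcases hi with ⟨rfl, rfl⟩ | ⟨rfl, rfl⟩
    · have hne : (i, i + 1) ≠ (b, d) := by grind
      refine ⟨.inr (b, d), Finset.inr_mem_disjSum.2 (by simp [hne.symm]), ?_⟩
      have h' : (i, i + 1) ∉ insert (b, d) R := by simp [hR, hne]
      simp only [opening, if_neg (by omega : ¬d < i), if_pos hcb, Finset.erase_insert h',
        Finset.erase_insert (notMem_of_fst_mem_fixedPts (p := (b, d)) hb)]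
    · have hne : (i, i + 1) ≠ (a, c) := by grind
      refine ⟨.inr (a, c), Finset.inr_mem_disjSum.2 (by simp [hne.symm]), ?_⟩
      have h' : (i, i + 1) ∉ insert (a, c) R := by simp [hR, hne]
      simp only [opening, if_pos hcb, Finset.insert_comm (a, c), Finset.erase_insert h',
        Finset.erase_insert (notMem_of_fst_mem_fixedPts (p := (a, c)) ha)]
  · obtain ⟨rfl, rfl⟩ : i = c ∧ i + 1 = b := hi.resolve_left (by omega)
    have hne : (i, i + 1) ≠ (a, d) := by grind
    refine ⟨.inr (a, d), Finset.inr_mem_disjSum.2 (by simp [hne.symm]), ?_⟩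
    have h' : (i, i + 1) ∉ insert (a, d) R := by simp [hR, hne]
    simp only [opening, if_neg (by omega : ¬d < i), if_neg (by omega : ¬i + 1 < a),
      Finset.insert_comm (a, d), Finset.erase_insert h',
      Finset.erase_insert (notMem_of_fst_mem_fixedPts (p := (a, d)) ha)]

lemma exists_opening_eq (hω : IsLinkPattern n ω) (hpred : IsPredecessor n υ ω)
    (hnot : (i, i + 1) ∉ ω) (hi : (i, i + 1) ∈ υ) :
    ∃ s ∈ (fixedPts n υ).disjSum (υ.erase (i, i + 1)), opening i υ s = ω := by
  rcases hpred.exists_eq_insert hω with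
    ⟨R, x, f, y, hx, hf, hy, hxf, hfy, rfl, rfl | rfl⟩ |
    ⟨R, a, c, b, d, ha, -, hb, -, hac, hcb, hbd, rfl, hυ⟩ <;>
  have hR : (i, i + 1) ∉ R := fun h => hnot (by simp [h])
  · obtain ⟨rfl, rfl⟩ : i = x ∧ i + 1 = f := by simpa [hR] using hi
    refine ⟨.inl y, Finset.inl_mem_disjSum.2 (mem_fixedPts_insert hy (by omega) (by omega)), ?_⟩
    simp only [opening, Finset.erase_insert hR, if_neg (by omega : ¬y < i)]
  · obtain ⟨rfl, rfl⟩ : i = f ∧ i + 1 = y := by simpa [hR] using hi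
    refine ⟨.inl x, Finset.inl_mem_disjSum.2 (mem_fixedPts_insert hx (by omega) (by omega)), ?_⟩
    simp only [opening, Finset.erase_insert hR, if_pos hxf]
  · exact exists_opening_eq_of_cross ha hb hac hcb hbd hR hi hυ

lemma card_filter_isPredecessor_notMem (hυ : IsLinkPattern n υ) (hi : (i, i + 1) ∈ υ) :
    ((allSub n).filter fun ω => IsLinkPattern n ω ∧ IsPredecessor n υ ω ∧ (i, i + 1) ∉ ω).card =
      (fixedPts n υ).card + (υ.card - 1) := by
  rw [← Finset.card_erase_of_mem hi, ← Finset.card_disjSum]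
  refine (Finset.card_bij (fun s _ => opening i υ s) ?_
    (fun s₁ h₁ s₂ h₂ h => opening_injOn hυ hi h₁ h₂ h) ?_).symm
  · rintro (f | w) hs
    · obtain ⟨hpat, hpred, hnot⟩ := opening_inl_spec hυ hi (Finset.inl_mem_disjSum.1 hs)
      exact Finset.mem_filter.2 ⟨mem_allSub hpat, hpat, hpred, hnot⟩
    · obtain ⟨hpat, hpred, hnot⟩ := opening_inr_spec hυ hi (Finset.inr_mem_disjSum.1 hs)
      exact Finset.mem_filter.2 ⟨mem_allSub hpat, hpat, hpred, hnot⟩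
  · intro ω hω
    obtain ⟨-, hpat, hpred, hnot⟩ := Finset.mem_filter.1 hω
    obtain ⟨s, hs, h⟩ := exists_opening_eq hpat hpred hnot hi
    exact ⟨s, hs, h⟩

end Opening

section Counting

def IsNeighbor (n k : ℕ) (σ υ ω : Finset (ℕ × ℕ)) : Prop :=
  IsLinkPattern n ω ∧ ω.card = k ∧ lpLE n ω σ ∧ (IsPredecessor n ω υ ∨ IsPredecessor n υ ω)

lemma aNum_eq_card_filter (n k : ℕ) (σ υ : Finset (ℕ × ℕ)) :
    aNum n k σ υ = ((allSub n).filter (IsNeighbor n k σ υ)).card := by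
  unfold aNum IsNeighbor
  convert rfl

variable {n i k : ℕ} {σ υ ω : Finset (ℕ × ℕ)}

lemma card_filter_isNeighbor_notMem (hυ : IsLinkPattern n υ) (hi : (i, i + 1) ∈ υ)
    (hle : lpLE n υ σ) :
    ((allSub n).filter fun ω => IsNeighbor n υ.card σ υ ω ∧ (i, i + 1) ∉ ω).card =
      (fixedPts n υ).card + (υ.card - 1) := by
  rw [← card_filter_isPredecessor_notMem hυ hi]
  refine congrArg _ (Finset.filter_congr fun ω _ => ⟨?_, ?_⟩)
  · rintro ⟨⟨hω, -, -, hpred | hpred⟩, hnot⟩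
    · exact absurd (hpred.minArc_mem hυ hi) hnot
    · exact ⟨hω, hpred, hnot⟩
  · rintro ⟨hω, hpred, hnot⟩
    exact ⟨⟨hω, (hpred.card_eq hω).symm, lpLE_trans (hpred.lpLE hω) hle, Or.inr hpred⟩, hnot⟩

lemma isNeighbor_reinsert_iff (hi : 1 ≤ i) (hin : i + 1 ≤ n) (hk : 1 ≤ k) :
    IsNeighbor n k (reinsert i σ) (reinsert i υ) (reinsert i ω) ↔
      IsNeighbor (n - 2) (k - 1) σ υ ω := by
  unfold IsNeighbor
  rw [isLinkPattern_reinsert_iff hi hin, card_reinsert, isPredecessor_reinsert_iff hi hin,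
    isPredecessor_reinsert_iff hi hin]
  refine and_congr_right fun hω => ?_
  rw [lpLE_reinsert_iff hω hi hin]
  exact and_congr_left' (by omega)

lemma aNum_reinsert (hυ : IsLinkPattern (n - 2) υ) (hυk : υ.card + 1 = k) (hkn : 2 * k ≤ n)
    (hle : lpLE (n - 2) υ σ) (hi : 1 ≤ i) (hin : i + 1 ≤ n) :
    aNum n k (reinsert i σ) (reinsert i υ) = aNum (n - 2) (k - 1) σ υ + (n - k - 1) := by
  have hυ' : IsLinkPattern n (reinsert i υ) := (isLinkPattern_reinsert_iff hi hin).2 hυ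
  have hcard : (reinsert i υ).card = k := by rw [card_reinsert, hυk]
  rw [aNum_eq_card_filter, aNum_eq_card_filter,
    ← Finset.card_filter_add_card_filter_not (p := fun ω => (i, i + 1) ∈ ω),
    Finset.filter_filter, Finset.filter_filter]
  congr 1
  · rw [← Finset.card_image_of_injective ((allSub (n - 2)).filter (IsNeighbor (n - 2) (k - 1) σ υ))
      (reinsert_injective (i := i))]
    congr 1
    ext ω
    simp only [Finset.mem_filter, Finset.mem_image]
    constructor
    · rintro ⟨-, hω, harc⟩
      obtain ⟨ω', rfl⟩ := exists_reinsert_eq hω.1 harc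
      have hω' := (isNeighbor_reinsert_iff hi hin (by omega)).1 hω
      exact ⟨ω', ⟨mem_allSub hω'.1, hω'⟩, rfl⟩
    · rintro ⟨ω', ⟨-, hω'⟩, rfl⟩
      have hω := (isNeighbor_reinsert_iff hi hin (by omega)).2 hω'
      exact ⟨mem_allSub hω.1, hω, Finset.mem_insert_self _ _⟩
  · conv_lhs => rw [← hcard]
    rw [card_filter_isNeighbor_notMem hυ' (Finset.mem_insert_self _ _)
      ((lpLE_reinsert_iff hυ hi hin).2 hle), card_fixedPts hυ', hcard]
    omega

lemma pNum_reinsert (hσ : IsMaximal n (reinsert i σ)) (hk : 1 ≤ k) (hkn : 2 * k ≤ n)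
    (hi : 1 ≤ i) (hin : i + 1 ≤ n) :
    pNum n k (reinsert i σ) = pNum (n - 2) (k - 1) σ + (n - k - 1) := by
  obtain ⟨-, hb, hc⟩ := hσ
  have hb' : bridges (n - 2) σ = 0 :=
    Nat.eq_zero_of_le_zero (hb ▸ bridges_le_bridges_reinsert hi hin σ)
  have hc' : crossings σ = 0 := Nat.eq_zero_of_le_zero (hc ▸ crossings_le_crossings_reinsert σ)
  have hsucc : ∀ m, (m + 1).choose 2 = m.choose 2 + m := fun m => by
    rw [Nat.choose_succ_succ', Nat.choose_one_right, add_comm]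
  have hnk := hsucc (n - k - 1)
  rw [show n - k - 1 + 1 = n - k by omega] at hnk
  have h₂ : n - 2 - (k - 1) = n - k - 1 := by omega
  have h₃ : n - 2 - 2 * (k - 1) = n - 2 * k := by omega
  have hle : (n - 2 * k).choose 2 ≤ (n - k - 1).choose 2 := Nat.choose_le_choose 2 (by omega)
  rw [pNum, pNum, hb, hc, hb', hc', h₂, h₃]
  omega

lemma isSingularPt_reinsert_iff (hσ : IsMaximal n (reinsert i σ)) (hω : IsLinkPattern (n - 2) ω)
    (hωk : ω.card + 1 = k) (hkn : 2 * k ≤ n) (hle : lpLE (n - 2) ω σ) (hi : 1 ≤ i)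
    (hin : i + 1 ≤ n) :
    IsSingularPt n k (reinsert i σ) (reinsert i ω) ↔ IsSingularPt (n - 2) (k - 1) σ ω := by
  rw [IsSingularPt, IsSingularPt, pNum_reinsert hσ (by omega) hkn hi hin,
    aNum_reinsert hω hωk hkn hle hi hin, add_lt_add_iff_right]

lemma inSing_reinsert_iff (hσ : IsMaximal n (reinsert i σ)) (hυ : IsLinkPattern (n - 2) υ)
    (hυk : υ.card + 1 = k) (hkn : 2 * k ≤ n) (hi : 1 ≤ i) (hin : i + 1 ≤ n) :
    InSing n k (reinsert i σ) (reinsert i υ) ↔ InSing (n - 2) (k - 1) σ υ := by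
  unfold InSing
  rw [isLinkPattern_reinsert_iff hi hin, card_reinsert, lpLE_reinsert_iff hυ hi hin]
  refine and_congr_right fun _ => and_congr (by omega) (and_congr_right fun hle =>
    and_congr (isSingularPt_reinsert_iff hσ hυ hυk hkn hle hi hin) ⟨?_, ?_⟩)
  · intro hmax ω hω hωk hωσ hωs hυω
    refine reinsert_injective (hmax _ ((isLinkPattern_reinsert_iff hi hin).2 hω)
      (by rw [card_reinsert]; omega) ((lpLE_reinsert_iff hω hi hin).2 hωσ) ?_
      ((lpLE_reinsert_iff hυ hi hin).2 hυω))
    exact (isSingularPt_reinsert_iff hσ hω (by omega) hkn hωσ hi hin).2 hωs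
  · intro hmax ω hω hωk hωσ hωs hυω
    obtain ⟨ω, rfl⟩ :=
      exists_reinsert_eq hω (minArc_mem_of_lpLE hω (Finset.mem_insert_self _ _) hi hin hυω)
    rw [isLinkPattern_reinsert_iff hi hin] at hω
    rw [card_reinsert] at hωk
    rw [lpLE_reinsert_iff hω hi hin] at hωσ
    rw [isSingularPt_reinsert_iff hσ hω hωk hkn hωσ hi hin] at hωs
    rw [lpLE_reinsert_iff hυ hi hin] at hυω
    rw [hmax ω hω (by omega) hωσ hωs hυω]

end Counting

theorem extract_min_arc_general (n k : ℕ) (hnk : 2 * k ≤ n) (σ υ : Finset (ℕ × ℕ)) (i : ℕ)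
    (hσ : IsMaximal n σ)
    (hυ : IsLinkPattern n υ) (hυk : υ.card = k)
    (hiσ : (i, i + 1) ∈ σ) (hiυ : (i, i + 1) ∈ υ) :
    (lpLE n υ σ ↔ lpLE (n - 2) (extract i υ) (extract i σ)) ∧
    ((lpLE n υ σ ∧ IsSingularPt n k σ υ) ↔
      (lpLE (n - 2) (extract i υ) (extract i σ) ∧
        IsSingularPt (n - 2) (k - 1) (extract i σ) (extract i υ))) ∧
    (InSing n k σ υ ↔ InSing (n - 2) (k - 1) (extract i σ) (extract i υ)) := by
  obtain ⟨hi, -, hin⟩ := hσ.1.1 _ hiσ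
  obtain ⟨σ, rfl⟩ := exists_reinsert_eq hσ.1 hiσ
  obtain ⟨υ, rfl⟩ := exists_reinsert_eq hυ hiυ
  rw [card_reinsert] at hυk
  rw [isLinkPattern_reinsert_iff hi hin] at hυ
  simp only [extract_reinsert]
  have hle := lpLE_reinsert_iff (σ := σ) hυ hi hin
  refine ⟨hle, ?_, inSing_reinsert_iff hσ hυ hυk hnk hi hin⟩
  rw [hle]
  exact and_congr_right fun h => isSingularPt_reinsert_iff hσ hυ hυk hnk h hi hin

/-- extracting a common minimal arc `(i,i+1)` preserves the order `≤`,
singularity of the point, and membership in `Sing`. -/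
theorem extract_min_arc (n k : ℕ) (hnk : 2 * k ≤ n) (σ υ : Finset (ℕ × ℕ)) (i : ℕ)
    (hσ : IsMaximal n σ) (hσk : σ.card = k)
    (hυ : IsLinkPattern n υ) (hυk : υ.card = k)
    (hiσ : (i, i + 1) ∈ σ) (hiυ : (i, i + 1) ∈ υ) :
    (lpLE n υ σ ↔ lpLE (n - 2) (extract i υ) (extract i σ)) ∧
    ((lpLE n υ σ ∧ IsSingularPt n k σ υ) ↔
      (lpLE (n - 2) (extract i υ) (extract i σ) ∧
        IsSingularPt (n - 2) (k - 1) (extract i σ) (extract i υ))) ∧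
    (InSing n k σ υ ↔ InSing (n - 2) (k - 1) (extract i σ) (extract i υ)) :=
  extract_min_arc_general n k hnk σ υ i hσ hυ hυk hiσ hiυ

end LinkPatterns
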